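/- Let x, x', x'' ∈ B^n with CC(x,x') ≠ ∅ and CC(x,x'') ≠ ∅. Then CC(x,x') ∩ CC(x,x'') ≠ ∅ if and only if CC(x',x'') ≠ ∅. -/

import Mathlib

/-- A configuration of a Boolean automata network of size `n`. -/
abbrev Conf (n : ℕ) := Fin n → Bool

/-- `F_I`: update simultaneously exactly the automata in `I`. -/
def updSet {n : ℕ} (F : Conf n → Conf n) (I : Finset (Fin n)) (x : Conf n) : Conf n :=
  fun i => if i ∈ I then F x i else x i

/-- `W_{<j}`: union of the first `j` blocks of the schedule `W`. -/
def prefUnion {n : ℕ} (W : List (Finset (Fin n))) (j : ℕ) : Finset (Fin n) :=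
  (W.take j).foldr (· ∪ ·) ∅

/-- `W` is a block-sequential update schedule: an ordered partition of the automata. -/
def isSchedule {n : ℕ} (W : List (Finset (Fin n))) : Prop :=
  (∀ B ∈ W, B.Nonempty) ∧ W.Pairwise Disjoint ∧ W.foldr (· ∪ ·) ∅ = Finset.univ

/-- Confusable configurations: identical after updating the first `i` blocks, some `i ∈ [0,p]`. -/
def confusable {n : ℕ} (F : Conf n → Conf n) (W : List (Finset (Fin n))) (x x' : Conf n) : Prop :=
  ∃ i ≤ W.length, updSet F (prefUnion W i) x = updSet F (prefUnion W i) x'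

/-- `CC(x,x')`: the set of steps making `x` and `x'` confusable. -/
def CCset {n : ℕ} (F : Conf n → Conf n) (W : List (Finset (Fin n))) (x x' : Conf n) : Set ℕ :=
  {i | i ≤ W.length ∧ updSet F (prefUnion W i) x = updSet F (prefUnion W i) x'}

/-- The `G_NECC` graph: edges between non-equivalent confusable configurations. -/
def gnecc {n : ℕ} (F : Conf n → Conf n) (W : List (Finset (Fin n))) :
    SimpleGraph (Conf n) where
  Adj x x' := F x ≠ F x' ∧ confusable F W x x'
  symm := by
    constructor
    rintro x x' ⟨hne, i, hi, h⟩
    exact ⟨hne.symm, i, hi, h.symm⟩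
  loopless := by constructor; rintro x ⟨hne, _⟩; exact hne rfl

/-- `F^W`: apply the blocks of `W` sequentially. -/
def runSched {n : ℕ} (F : Conf n → Conf n) (W : List (Finset (Fin n))) (x : Conf n) : Conf n :=
  W.foldl (fun y B => updSet F B y) x

/-- `W(i)`: the index of the block of `W` containing `i`. -/
def stepOf {n : ℕ} (W : List (Finset (Fin n))) (i : Fin n) : ℕ :=
  W.findIdx (fun B => decide (i ∈ B))

/-- `W' ∈ E_h(W,V')`: `W'` extends `W`, preserving the update order via `h`. -/
def extendsSched {n m : ℕ} (W : List (Finset (Fin n))) (W' : List (Finset (Fin m)))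
    (h : Fin n → Fin m) : Prop :=
  ∀ i i' : Fin n, (stepOf W i ≤ stepOf W i' ↔ stepOf W' (h i) ≤ stepOf W' (h i'))

/-- `(F',W')` `h`-simulates `(F,[V])`: `φ_h ∘ F'^{W'} = F ∘ φ_h`. -/
def simulates {n m : ℕ} (F' : Conf m → Conf m) (W' : List (Finset (Fin m)))
    (F : Conf n → Conf n) (h : Fin n → Fin m) : Prop :=
  ∀ z : Conf m, (fun i => runSched F' W' z (h i)) = F (fun i => z (h i))

/-- `κ(F,W)`: minimal number of additional automata needed to simulate `(F,[V])`
with a schedule extending `W` order-preservingly. -/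
noncomputable def kappa {n : ℕ} (F : Conf n → Conf n) (W : List (Finset (Fin n))) : ℕ :=
  sInf {k | ∃ h : Fin n → Fin (n + k), Function.Injective h ∧
    ∃ W' : List (Finset (Fin (n + k))), isSchedule W' ∧ extendsSched W W' h ∧
      ∃ F' : Conf (n + k) → Conf (n + k), simulates F' W' F h}

/-- The simple sequential update schedule `({0},{1},…,{n-1})`. -/
def seqSched (n : ℕ) : List (Finset (Fin n)) := (List.finRange n).map (fun i => {i})

/-!
Updating a set `I` of automata makes `y` and `y'` agree iff `F y` and `F y'` agree on `I` and
`y`, `y'` agree off `I`. The prefixes `W_{<i}` are nested, and the median `j` of steps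
`a ∈ CC(x,x')`, `b ∈ CC(x,x'')`, `c ∈ CC(x',x'')` is at most two of them and at least two of
them. So for each pair, agreement on and off `W_{<j}` comes either from the pair's own step or,
by transitivity through the third configuration, from the other two steps.
-/

theorem List.mem_foldr_union {α : Type*} [DecidableEq α] {L : List (Finset α)} {a : α} :
    a ∈ L.foldr (· ∪ ·) ∅ ↔ ∃ B ∈ L, a ∈ B := by
  induction L <;> simp [*]

section

variable {n : ℕ} {F : Conf n → Conf n}

theorem prefUnion_mono (W : List (Finset (Fin n))) : Monotone (prefUnion W) := by
  intro j k hjk a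
  simp only [prefUnion, List.mem_foldr_union]
  exact fun ⟨B, hB, haB⟩ => ⟨B, W.take_subset_take_left hjk hB, haB⟩

theorem updSet_eq_updSet_iff {I : Finset (Fin n)} {y y' : Conf n} :
    updSet F I y = updSet F I y' ↔ (∀ k ∈ I, F y k = F y' k) ∧ ∀ k ∉ I, y k = y' k := by
  simp only [funext_iff, updSet]
  constructor
  · intro h
    exact ⟨fun k hk => by simpa [hk] using h k, fun k hk => by simpa [hk] using h k⟩
  · rintro ⟨hin, hout⟩ k
    split_ifs with hk
    exacts [hin k hk, hout k hk]

theorem updSet_eq_of_triangle {I K L J : Finset (Fin n)} {y y' y'' : Conf n}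
    (hI : updSet F I y = updSet F I y') (hK : updSet F K y = updSet F K y'')
    (hL : updSet F L y' = updSet F L y'')
    (hsup : J ⊆ I ∨ J ⊆ K ∧ J ⊆ L) (hsub : I ⊆ J ∨ K ⊆ J ∧ L ⊆ J) :
    updSet F J y = updSet F J y' := by
  rw [updSet_eq_updSet_iff] at hI hK hL ⊢
  refine ⟨fun k hk => ?_, fun k hk => ?_⟩
  · rcases hsup with hJI | ⟨hJK, hJL⟩
    · exact hI.1 k (hJI hk)
    · exact (hK.1 k (hJK hk)).trans (hL.1 k (hJL hk)).symm
  · rcases hsub with hIJ | ⟨hKJ, hLJ⟩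
    · exact hI.2 k (fun h => hk (hIJ h))
    · exact (hK.2 k (fun h => hk (hKJ h))).trans (hL.2 k (fun h => hk (hLJ h))).symm

theorem median_mem_CCset_inter {W : List (Finset (Fin n))} {x x' x'' : Conf n} {a b c : ℕ}
    (ha : a ∈ CCset F W x x') (hb : b ∈ CCset F W x x'') (hc : c ∈ CCset F W x' x'') :
    max (min a b) (min (max a b) c) ∈ CCset F W x x' ∩ CCset F W x x'' := by
  obtain ⟨ha_le, hxx'⟩ := ha
  obtain ⟨hb_le, hxx''⟩ := hb
  set j := max (min a b) (min (max a b) c)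
  have sub {p q : ℕ} (h : p ≤ q) : prefUnion W p ⊆ prefUnion W q := prefUnion_mono W h
  refine ⟨⟨by omega, ?_⟩, by omega, ?_⟩
  · exact updSet_eq_of_triangle hxx' hxx'' hc.2
      ((show j ≤ a ∨ j ≤ b ∧ j ≤ c by omega).imp sub (And.imp sub sub))
      ((show a ≤ j ∨ b ≤ j ∧ c ≤ j by omega).imp sub (And.imp sub sub))
  · exact updSet_eq_of_triangle hxx'' hxx' hc.2.symm
      ((show j ≤ b ∨ j ≤ a ∧ j ≤ c by omega).imp sub (And.imp sub sub))
      ((show b ≤ j ∨ a ≤ j ∧ c ≤ j by omega).imp sub (And.imp sub sub))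

end

theorem stmt11_general {n : ℕ} (F : Conf n → Conf n) (W : List (Finset (Fin n)))
    (x x' x'' : Conf n)
    (h1 : (CCset F W x x').Nonempty) (h2 : (CCset F W x x'').Nonempty) :
    (CCset F W x x' ∩ CCset F W x x'').Nonempty ↔ (CCset F W x' x'').Nonempty := by
  constructor
  · rintro ⟨i, ⟨hi, hx'⟩, -, hx''⟩
    exact ⟨i, hi, hx'.symm.trans hx''⟩
  · rintro ⟨c, hc⟩
    obtain ⟨a, ha⟩ := h1
    obtain ⟨b, hb⟩ := h2
    exact ⟨_, median_mem_CCset_inter ha hb hc⟩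

theorem stmt11 {n : ℕ} (F : Conf n → Conf n) (W : List (Finset (Fin n)))
    (hW : isSchedule W) (x x' x'' : Conf n)
    (h1 : (CCset F W x x').Nonempty) (h2 : (CCset F W x x'').Nonempty) :
    (CCset F W x x' ∩ CCset F W x x'').Nonempty ↔ (CCset F W x' x'').Nonempty :=
  stmt11_general F W x x' x'' h1 h2
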